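/- Let [X,B,m,ν] be a reversible random walk space and Ω ∈ B with Ω and Ω_m m-connected, 0 < ν(Ω) < ν(Ω_m) < ∞, and Ω satisfying a 2-Poincaré inequality. Assume there exists an eigenfunction f associated to λ_{m,2}(Ω) (i.e. f ∈ L²(Ω_m,ν), f = 0 ν-a.e. on ∂_mΩ, −∫_{Ω_m}(f(y) − f(x)) dm_x(y) = λ_{m,2}(Ω) f(x) for ν-a.e. x ∈ Ω) and constants 0 < α ≤ α̃ with α ≤ f ≤ α̃ ν-a.e. on Ω. Then λ_{m,2}(Ω) = 1 − lim_{n→∞} (g_{m,Ω}(2n) / g_{m,Ω}(n))^{1/n}. -/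

import Mathlib

open MeasureTheory ENNReal Filter Topology

namespace RandomWalkSpace

variable {X : Type*} [MeasurableSpace X]

/-- A random walk: a family of probability measures `m x`, measurably depending on `x`. -/
def IsRandomWalk (m : X → Measure X) : Prop :=
  (∀ x, IsProbabilityMeasure (m x)) ∧
    ∀ A : Set X, MeasurableSet A → Measurable fun x => m x A

/-- Reversibility (detailed balance) of `ν` with respect to the random walk `m`. -/
def Reversible (m : X → Measure X) (ν : Measure X) : Prop :=
  ∀ A B : Set X, MeasurableSet A → MeasurableSet B →
    ∫⁻ x in A, m x B ∂ν = ∫⁻ x in B, m x A ∂ν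

/-- The `m`-boundary of `Ω`. -/
def mBoundary (m : X → Measure X) (Ω : Set X) : Set X :=
  {x | x ∉ Ω ∧ 0 < m x Ω}

/-- The `m`-closure of `Ω`. -/
def mClosure (m : X → Measure X) (Ω : Set X) : Set X :=
  Ω ∪ mBoundary m Ω

/-- `D` is `m`-connected (with respect to `ν`). -/
def mConnected (m : X → Measure X) (ν : Measure X) (D : Set X) : Prop :=
  ∀ A B : Set X, MeasurableSet A → MeasurableSet B → A ⊆ D → B ⊆ D →
    A ∪ B = D → 0 < ν A → 0 < ν B → 0 < ∫⁻ x in A, m x B ∂ν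

/-- The `m`-perimeter of `Ω`. -/
noncomputable def mPerimeter (m : X → Measure X) (ν : Measure X) (Ω : Set X) : ℝ≥0∞ :=
  ∫⁻ x in Ω, m x Ωᶜ ∂ν

/-- `survival m Ω n x` is the mass of paths of `n` jumps starting at `x` that stay in `Ω`. -/
noncomputable def survival (m : X → Measure X) (Ω : Set X) : ℕ → X → ℝ≥0∞
  | 0, _ => 1
  | n + 1, x => ∫⁻ y in Ω, survival m Ω n y ∂(m x)

/-- `gseq m ν Ω n` is the mass of paths of `n` jumps that start in `Ω` and stay in `Ω`. -/
noncomputable def gseq (m : X → Measure X) (ν : Measure X) (Ω : Set X) (n : ℕ) : ℝ≥0∞ :=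
  ∫⁻ x in Ω, survival m Ω n x ∂ν

/-- The spectral `m`-heat content of `Ω` at time `t`. -/
noncomputable def heatContent (m : X → Measure X) (ν : Measure X) (Ω : Set X) (t : ℝ) : ℝ≥0∞ :=
  ∑' k : ℕ, gseq m ν Ω k * ENNReal.ofReal (Real.exp (-t) * t ^ k / (Nat.factorial k))

/-- The nonlocal `p`-energy `∫_{Ω_m×Ω_m} |f(y) − f(x)|^p dm_x(y)dν(x)`. -/
noncomputable def energy (m : X → Measure X) (ν : Measure X) (Ω : Set X) (p : ℝ)
    (f : X → ℝ) : ℝ≥0∞ :=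
  ∫⁻ x in mClosure m Ω, ∫⁻ y in mClosure m Ω, ENNReal.ofReal (|f y - f x| ^ p) ∂(m x) ∂ν

/-- `f ∈ L^p_0(Ω_m,ν)`: `f ∈ L^p(Ω_m,ν)` and `f = 0` ν-a.e. on `∂_m Ω`. -/
def InLp0 (m : X → Measure X) (ν : Measure X) (Ω : Set X) (p : ℝ) (f : X → ℝ) : Prop :=
  MemLp f (ENNReal.ofReal p) (ν.restrict (mClosure m Ω)) ∧
    ∀ᵐ x ∂ν.restrict (mBoundary m Ω), f x = 0

/-- `Ω` satisfies a `p`-Poincaré inequality. -/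
def PoincareInequality (m : X → Measure X) (ν : Measure X) (Ω : Set X) (p : ℝ) : Prop :=
  ∃ lam : ℝ, 0 < lam ∧ ∀ f : X → ℝ, InLp0 m ν Ω p f →
    ENNReal.ofReal lam * ∫⁻ x in Ω, ENNReal.ofReal (|f x| ^ p) ∂ν ≤ energy m ν Ω p f

/-- The `m`-stress function of `Ω`. -/
def IsStressFunction (m : X → Measure X) (ν : Measure X) (Ω : Set X) (f : X → ℝ) : Prop :=
  InLp0 m ν Ω 2 f ∧ (∀ᵐ x ∂ν.restrict (mClosure m Ω), 0 ≤ f x) ∧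
    ∀ᵐ x ∂ν.restrict Ω, -∫ y in mClosure m Ω, (f y - f x) ∂(m x) = 1

/-- The `p`-torsion function of `Ω`. -/
def IsPStressFunction (m : X → Measure X) (ν : Measure X) (Ω : Set X) (p : ℝ)
    (f : X → ℝ) : Prop :=
  InLp0 m ν Ω p f ∧ (∀ᵐ x ∂ν.restrict (mClosure m Ω), 0 ≤ f x) ∧
    ∀ᵐ x ∂ν.restrict Ω,
      -∫ y in mClosure m Ω, |f y - f x| ^ (p - 2) * (f y - f x) ∂(m x) = 1

/-- The Rayleigh quotient infimum `λ_{m,p}(Ω)`. -/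
noncomputable def rayleigh (m : X → Measure X) (ν : Measure X) (Ω : Set X) (p : ℝ) : ℝ≥0∞ :=
  ⨅ (f : X → ℝ) (_ : InLp0 m ν Ω p f)
    (_ : 0 < ∫⁻ x in Ω, ENNReal.ofReal (|f x| ^ p) ∂ν),
    (energy m ν Ω p f / 2) / ∫⁻ x in Ω, ENNReal.ofReal (|f x| ^ p) ∂ν

/-- The `m`-Cheeger constant `h_1^m(Ω)`. -/
noncomputable def cheeger1 (m : X → Measure X) (ν : Measure X) (Ω : Set X) : ℝ≥0∞ :=
  ⨅ (E : Set X) (_ : MeasurableSet E) (_ : E ⊆ Ω) (_ : 0 < ν E),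
    mPerimeter m ν E / ν E

/-- The `m`-`p`-Cheeger constant `h_p^m(Ω)`. -/
noncomputable def cheegerP (m : X → Measure X) (ν : Measure X) (Ω : Set X) (p : ℝ) : ℝ≥0∞ :=
  ⨅ (E : Set X) (_ : MeasurableSet E) (_ : E ⊆ Ω) (_ : 0 < ν E),
    mPerimeter m ν E / ν E ^ p

/-- The functional `F_{m,p}(f) = (1/(2p)) ∫∫ |∇f|^p − ∫_Ω f`, with values in `EReal`. -/
noncomputable def torsionalFunctional (m : X → Measure X) (ν : Measure X) (Ω : Set X)
    (p : ℝ) (f : X → ℝ) : EReal :=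
  ((energy m ν Ω p f / ENNReal.ofReal (2 * p) : ℝ≥0∞) : EReal) -
    ((∫ x in Ω, f x ∂ν : ℝ) : EReal)

end RandomWalkSpace

/-! The eigen-equation says that the walk killed on leaving `Ω`, `P h (x) = ∫_Ω h dm_x`, satisfies
`P f = (1 - λ) f` on `Ω`, while the survival mass is `P^n 1`. Since `α ≤ f ≤ α'`, iterating gives
`α P^n 1 ≤ (1 - λ)^n f ≤ α' P^n 1`, so after integration over `Ω` the sequence `g(n)` is comparable
to `(1 - λ)^n` up to constant factors; the constants cancel in the `n`-th root of `g(2n)/g(n)`.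
Reversibility is what allows `ν`-a.e. facts on `Ω` to be evaluated under the kernels `m_x`. -/

namespace RandomWalkSpace

variable {X : Type*} [MeasurableSpace X] {m : X → Measure X} {ν : Measure X} {Ω : Set X}

lemma measurableSet_mBoundary (hm : IsRandomWalk m) (hΩ : MeasurableSet Ω) :
    MeasurableSet (mBoundary m Ω) :=
  hΩ.compl.inter (hm.2 Ω hΩ measurableSet_Ioi)

lemma measurableSet_mClosure (hm : IsRandomWalk m) (hΩ : MeasurableSet Ω) :
    MeasurableSet (mClosure m Ω) :=
  hΩ.union (measurableSet_mBoundary hm hΩ)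

lemma ae_measure_eq_zero_of_measure_eq_zero (hm : IsRandomWalk m) (hrev : Reversible m ν)
    {S N : Set X} (hS : MeasurableSet S) (hN : ν N = 0) :
    ∀ᵐ x ∂ν.restrict S, m x N = 0 := by
  have hN' : MeasurableSet (toMeasurable ν N) := measurableSet_toMeasurable ν N
  have h : ∫⁻ x in S, m x (toMeasurable ν N) ∂ν = 0 := by
    rw [hrev S _ hS hN', setLIntegral_measure_zero _ _ (by rwa [measure_toMeasurable])]
  filter_upwards [(lintegral_eq_zero_iff (hm.2 _ hN')).mp h] with x hx
  exact measure_mono_null (subset_toMeasurable ν N) hx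

lemma ae_ae_of_ae_restrict (hm : IsRandomWalk m) (hrev : Reversible m ν)
    {S D : Set X} (hS : MeasurableSet S) (hD : MeasurableSet D) {p : X → Prop}
    (hp : ∀ᵐ y ∂ν.restrict D, p y) :
    ∀ᵐ x ∂ν.restrict S, ∀ᵐ y ∂m x, y ∈ D → p y :=
  ae_measure_eq_zero_of_measure_eq_zero hm hrev hS ((ae_restrict_iff' hD).mp hp)

lemma ae_ae_mem_mClosure (hm : IsRandomWalk m) (hrev : Reversible m ν)
    (hΩ : MeasurableSet Ω) :
    ∀ᵐ x ∂ν.restrict Ω, ∀ᵐ y ∂m x, y ∈ mClosure m Ω := by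
  have hc : MeasurableSet (mClosure m Ω)ᶜ := (measurableSet_mClosure hm hΩ).compl
  have h : ∫⁻ x in Ω, m x (mClosure m Ω)ᶜ ∂ν = 0 := by
    rw [hrev Ω _ hΩ hc]
    refine setLIntegral_eq_zero hc fun y hy => ?_
    simp only [mClosure, mBoundary, Set.mem_compl_iff, Set.mem_union, Set.mem_ofPred_eq,
      not_or, not_and, not_lt, nonpos_iff_eq_zero] at hy
    exact hy.2 hy.1
  exact (lintegral_eq_zero_iff (hm.2 _ hc)).mp h

lemma survival_le_one [∀ x, IsProbabilityMeasure (m x)] (n : ℕ) (x : X) :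
    survival m Ω n x ≤ 1 := by
  induction n generalizing x with
  | zero => rfl
  | succ n ih =>
    calc survival m Ω (n + 1) x ≤ ∫⁻ _ in Ω, 1 ∂m x := lintegral_mono ih
      _ ≤ 1 := by simpa using prob_le_one

lemma gseq_le_measure [∀ x, IsProbabilityMeasure (m x)] (n : ℕ) : gseq m ν Ω n ≤ ν Ω :=
  (lintegral_mono fun x => survival_le_one n x).trans_eq (by simp)

lemma ae_setLIntegral_mono (hm : IsRandomWalk m) (hrev : Reversible m ν)
    (hΩ : MeasurableSet Ω) {G H : X → ℝ≥0∞} (h : G ≤ᵐ[ν.restrict Ω] H) :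
    ∀ᵐ x ∂ν.restrict Ω, ∫⁻ y in Ω, G y ∂m x ≤ ∫⁻ y in Ω, H y ∂m x := by
  filter_upwards [ae_ae_of_ae_restrict hm hrev hΩ hΩ h] with x hx
  exact lintegral_mono_ae ((ae_restrict_iff' hΩ).mpr hx)

lemma ae_mul_survival_le_pow_mul (hm : IsRandomWalk m) (hrev : Reversible m ν)
    (hΩ : MeasurableSet Ω) {F : X → ℝ≥0∞} {a c : ℝ≥0∞} (hc : c ≠ ⊤)
    (hF : ∀ᵐ x ∂ν.restrict Ω, ∫⁻ y in Ω, F y ∂m x = c * F x)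
    (ha : ∀ᵐ x ∂ν.restrict Ω, a ≤ F x) :
    ∀ n, ∀ᵐ x ∂ν.restrict Ω, a * survival m Ω n x ≤ c ^ n * F x
  | 0 => by simpa [survival] using ha
  | n + 1 => by
    filter_upwards [hF, ae_setLIntegral_mono hm hrev hΩ
      (ae_mul_survival_le_pow_mul hm hrev hΩ hc hF ha n)] with x hFx hx
    calc a * survival m Ω (n + 1) x ≤ ∫⁻ y in Ω, a * survival m Ω n y ∂m x :=
          lintegral_const_mul_le _ _
      _ ≤ ∫⁻ y in Ω, c ^ n * F y ∂m x := hx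
      _ = c ^ (n + 1) * F x := by
        rw [lintegral_const_mul' _ _ (pow_ne_top hc), hFx, pow_succ, mul_assoc]

lemma ae_pow_mul_le_mul_survival (hm : IsRandomWalk m) (hrev : Reversible m ν)
    (hΩ : MeasurableSet Ω) {F : X → ℝ≥0∞} {b c : ℝ≥0∞} (hb : b ≠ ⊤)
    (hF : ∀ᵐ x ∂ν.restrict Ω, ∫⁻ y in Ω, F y ∂m x = c * F x)
    (hFb : ∀ᵐ x ∂ν.restrict Ω, F x ≤ b) :
    ∀ n, ∀ᵐ x ∂ν.restrict Ω, c ^ n * F x ≤ b * survival m Ω n x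
  | 0 => by simpa [survival] using hFb
  | n + 1 => by
    filter_upwards [hF, ae_setLIntegral_mono hm hrev hΩ
      (ae_pow_mul_le_mul_survival hm hrev hΩ hb hF hFb n)] with x hFx hx
    calc c ^ (n + 1) * F x = c ^ n * ∫⁻ y in Ω, F y ∂m x := by rw [hFx, pow_succ, mul_assoc]
      _ ≤ ∫⁻ y in Ω, c ^ n * F y ∂m x := lintegral_const_mul_le _ _
      _ ≤ ∫⁻ y in Ω, b * survival m Ω n y ∂m x := hx
      _ = b * survival m Ω (n + 1) x := lintegral_const_mul' _ _ hb

lemma mul_gseq_le (hm : IsRandomWalk m) (hrev : Reversible m ν) (hΩ : MeasurableSet Ω)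
    {F : X → ℝ≥0∞} {a b c : ℝ≥0∞} (hc : c ≠ ⊤)
    (hF : ∀ᵐ x ∂ν.restrict Ω, ∫⁻ y in Ω, F y ∂m x = c * F x)
    (hF_bdd : ∀ᵐ x ∂ν.restrict Ω, a ≤ F x ∧ F x ≤ b) (n : ℕ) :
    a * gseq m ν Ω n ≤ c ^ n * b * ν Ω := by
  calc a * gseq m ν Ω n ≤ ∫⁻ x in Ω, a * survival m Ω n x ∂ν := lintegral_const_mul_le _ _
    _ ≤ ∫⁻ _ in Ω, c ^ n * b ∂ν := by
      refine lintegral_mono_ae ?_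
      filter_upwards [ae_mul_survival_le_pow_mul hm hrev hΩ hc hF
        (hF_bdd.mono fun _ h => h.1) n, hF_bdd] with x hx hxb
      exact hx.trans (by gcongr; exact hxb.2)
    _ = c ^ n * b * ν Ω := setLIntegral_const _ _

lemma le_mul_gseq (hm : IsRandomWalk m) (hrev : Reversible m ν) (hΩ : MeasurableSet Ω)
    {F : X → ℝ≥0∞} {a b c : ℝ≥0∞} (hb : b ≠ ⊤)
    (hF : ∀ᵐ x ∂ν.restrict Ω, ∫⁻ y in Ω, F y ∂m x = c * F x)
    (hF_bdd : ∀ᵐ x ∂ν.restrict Ω, a ≤ F x ∧ F x ≤ b) (n : ℕ) :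
    c ^ n * a * ν Ω ≤ b * gseq m ν Ω n := by
  calc c ^ n * a * ν Ω = ∫⁻ _ in Ω, c ^ n * a ∂ν := (setLIntegral_const _ _).symm
    _ ≤ ∫⁻ x in Ω, b * survival m Ω n x ∂ν := by
      refine lintegral_mono_ae ?_
      filter_upwards [ae_pow_mul_le_mul_survival hm hrev hΩ hb hF
        (hF_bdd.mono fun _ h => h.2) n, hF_bdd] with x hx hxa
      exact le_trans (by gcongr; exact hxa.1) hx
    _ = b * gseq m ν Ω n := lintegral_const_mul' _ _ hb

lemma toReal_gseq_bounds (hm : IsRandomWalk m) (hrev : Reversible m ν) (hΩ : MeasurableSet Ω)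
    (hΩ_top : ν Ω ≠ ⊤) {F : X → ℝ≥0∞} {a b q : ℝ} (hq : 0 ≤ q) (ha : 0 < a) (hab : a ≤ b)
    (hF : ∀ᵐ x ∂ν.restrict Ω, ∫⁻ y in Ω, F y ∂m x = ENNReal.ofReal q * F x)
    (hF_bdd : ∀ᵐ x ∂ν.restrict Ω, ENNReal.ofReal a ≤ F x ∧ F x ≤ ENNReal.ofReal b) (n : ℕ) :
    a * (ν Ω).toReal / b * q ^ n ≤ (gseq m ν Ω n).toReal ∧
      (gseq m ν Ω n).toReal ≤ b * (ν Ω).toReal / a * q ^ n := by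
  have := hm.1
  have hb : 0 < b := ha.trans_le hab
  have hgseq_top : gseq m ν Ω n ≠ ⊤ := ne_top_of_le_ne_top hΩ_top (gseq_le_measure n)
  have hlo := ENNReal.toReal_mono (by finiteness) (le_mul_gseq hm hrev hΩ ofReal_ne_top hF hF_bdd n)
  have hhi := ENNReal.toReal_mono (by finiteness) (mul_gseq_le hm hrev hΩ ofReal_ne_top hF hF_bdd n)
  simp only [ENNReal.toReal_mul, ENNReal.toReal_pow, ENNReal.toReal_ofReal hq,
    ENNReal.toReal_ofReal ha.le, ENNReal.toReal_ofReal hb.le] at hlo hhi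
  rw [div_mul_eq_mul_div, div_le_iff₀ hb, div_mul_eq_mul_div, le_div_iff₀ ha]
  constructor <;> linarith

lemma ae_integrableOn_mClosure (hm : IsRandomWalk m) (hrev : Reversible m ν)
    (hΩ : MeasurableSet Ω) {p C : ℝ} {f : X → ℝ} (hf : InLp0 m ν Ω p f)
    (hC : ∀ᵐ x ∂ν.restrict Ω, |f x| ≤ C) :
    ∀ᵐ x ∂ν.restrict Ω, IntegrableOn f (mClosure m Ω) (m x) := by
  have := hm.1
  have hΩm := measurableSet_mClosure hm hΩ
  obtain ⟨g, hg, hfg⟩ := hf.1.aestronglyMeasurable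
  filter_upwards [ae_ae_of_ae_restrict hm hrev hΩ hΩm hfg, ae_ae_of_ae_restrict hm hrev hΩ hΩ hC,
    ae_ae_of_ae_restrict hm hrev hΩ (measurableSet_mBoundary hm hΩ) hf.2] with x hfgx hCx h0x
  refine (integrable_const (max C 0)).mono' ⟨g, hg, (ae_restrict_iff' hΩm).mpr hfgx⟩
    ((ae_restrict_iff' hΩm).mpr ?_)
  filter_upwards [hCx, h0x] with y hCy h0y hy
  rcases hy with hy | hy
  · exact (hCy hy).trans (le_max_left _ _)
  · simp [h0y hy]

lemma ae_setIntegral_eq_of_eigen (hm : IsRandomWalk m) (hrev : Reversible m ν)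
    (hΩ : MeasurableSet Ω) {f : X → ℝ} {lam : ℝ}
    (hf0 : ∀ᵐ x ∂ν.restrict (mBoundary m Ω), f x = 0)
    (hint : ∀ᵐ x ∂ν.restrict Ω, IntegrableOn f (mClosure m Ω) (m x))
    (heig : ∀ᵐ x ∂ν.restrict Ω, -∫ y in mClosure m Ω, (f y - f x) ∂m x = lam * f x) :
    ∀ᵐ x ∂ν.restrict Ω, ∫ y in Ω, f y ∂m x = (1 - lam) * f x := by
  have := hm.1
  have hΩm := measurableSet_mClosure hm hΩ
  filter_upwards [hint, heig, ae_ae_mem_mClosure hm hrev hΩ,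
    ae_ae_of_ae_restrict hm hrev hΩ (measurableSet_mBoundary hm hΩ) hf0] with x hint_x hx hcl h0
  have hone : m x (mClosure m Ω) = 1 := (prob_compl_eq_zero_iff hΩm).mp hcl
  have hΩ_eq : ∫ y in mClosure m Ω, f y ∂m x = ∫ y in Ω, f y ∂m x :=
    setIntegral_eq_of_subset_of_ae_sdiff_eq_zero hΩm.nullMeasurableSet Set.subset_union_left
      (h0.mono fun y hy hy' => hy (hy'.1.resolve_left hy'.2))
  rw [integral_sub hint_x (integrable_const _), setIntegral_const, hΩ_eq, measureReal_def, hone,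
    ENNReal.toReal_one, one_smul] at hx
  linarith

lemma nonneg_of_ae_setIntegral_eq (hm : IsRandomWalk m) (hrev : Reversible m ν)
    (hΩ : MeasurableSet Ω) (hΩ0 : ν Ω ≠ 0) {f : X → ℝ} {q : ℝ}
    (hpos : ∀ᵐ x ∂ν.restrict Ω, 0 < f x)
    (heq : ∀ᵐ x ∂ν.restrict Ω, ∫ y in Ω, f y ∂m x = q * f x) : 0 ≤ q := by
  have : (ae (ν.restrict Ω)).NeBot := ae_neBot.mpr (by simpa using hΩ0)
  obtain ⟨x, hx, hfx, hpos_x⟩ :=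
    (heq.and (hpos.and (ae_ae_of_ae_restrict hm hrev hΩ hΩ hpos))).exists
  have hint_nonneg : 0 ≤ ∫ y in Ω, f y ∂m x :=
    integral_nonneg_of_ae ((ae_restrict_iff' hΩ).mpr (hpos_x.mono fun y hy hyΩ => (hy hyΩ).le))
  exact nonneg_of_mul_nonneg_left (hx ▸ hint_nonneg) hfx

lemma ae_setLIntegral_ofReal_eq (hm : IsRandomWalk m) (hrev : Reversible m ν)
    (hΩ : MeasurableSet Ω) {f : X → ℝ} {q : ℝ}
    (hint : ∀ᵐ x ∂ν.restrict Ω, IntegrableOn f (mClosure m Ω) (m x))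
    (hnonneg : ∀ᵐ x ∂ν.restrict Ω, 0 ≤ f x)
    (heq : ∀ᵐ x ∂ν.restrict Ω, ∫ y in Ω, f y ∂m x = q * f x) :
    ∀ᵐ x ∂ν.restrict Ω,
      ∫⁻ y in Ω, ENNReal.ofReal (f y) ∂m x = ENNReal.ofReal q * ENNReal.ofReal (f x) := by
  filter_upwards [hint, heq, hnonneg, ae_ae_of_ae_restrict hm hrev hΩ hΩ hnonneg]
    with x hint_x heq_x hfx hnonneg_x
  rw [← ofReal_integral_eq_lintegral_ofReal (hint_x.mono_set Set.subset_union_left)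
    ((ae_restrict_iff' hΩ).mpr hnonneg_x), heq_x, ENNReal.ofReal_mul' hfx]

end RandomWalkSpace

lemma tendsto_rpow_inv_of_le_pow {u : ℕ → ℝ} {q c₁ c₂ : ℝ} (hq : 0 ≤ q) (hc₁ : 0 < c₁)
    (hu : ∀ n, c₁ * q ^ n ≤ u n ∧ u n ≤ c₂ * q ^ n) :
    Tendsto (fun n : ℕ => u n ^ (n : ℝ)⁻¹) atTop (𝓝 q) := by
  have hc₂ : 0 < c₂ := hc₁.trans_le (by simpa using (hu 0).1.trans (hu 0).2)
  have hroot : ∀ c : ℝ, 0 < c → Tendsto (fun n : ℕ => (c * q ^ n) ^ (n : ℝ)⁻¹) atTop (𝓝 q) := by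
    intro c hc
    have h : Tendsto (fun n : ℕ => c ^ (n : ℝ)⁻¹ * q) atTop (𝓝 q) := by
      simpa using (tendsto_const_nhds.rpow (tendsto_inv_atTop_zero.comp
        tendsto_natCast_atTop_atTop) (Or.inl hc.ne')).mul_const q
    refine h.congr' ?_
    filter_upwards [eventually_ne_atTop 0] with n hn
    rw [Real.mul_rpow hc.le (pow_nonneg hq n), Real.pow_rpow_inv_natCast hq hn]
  refine tendsto_of_tendsto_of_tendsto_of_le_of_le (hroot c₁ hc₁) (hroot c₂ hc₂)
    (fun n => Real.rpow_le_rpow (by positivity) (hu n).1 (by positivity))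
    (fun n => Real.rpow_le_rpow ?_ (hu n).2 (by positivity))
  exact (mul_nonneg hc₁.le (pow_nonneg hq n)).trans (hu n).1

lemma tendsto_div_rpow_inv_of_le_pow {g : ℕ → ℝ} {q c₁ c₂ : ℝ} (hq : 0 ≤ q) (hc₁ : 0 < c₁)
    (hg : ∀ n, c₁ * q ^ n ≤ g n ∧ g n ≤ c₂ * q ^ n) :
    Tendsto (fun n : ℕ => (g (2 * n) / g n) ^ (n : ℝ)⁻¹) atTop (𝓝 q) := by
  have hc₂ : 0 < c₂ := hc₁.trans_le (by simpa using (hg 0).1.trans (hg 0).2)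
  refine tendsto_rpow_inv_of_le_pow (c₂ := c₂ / c₁) hq (div_pos hc₁ hc₂) fun n => ?_
  obtain ⟨hlo, hhi⟩ := hg n
  obtain ⟨hlo₂, hhi₂⟩ := hg (2 * n)
  have hpow : q ^ (2 * n) = q ^ n * q ^ n := by rw [two_mul, pow_add]
  have hqn : 0 ≤ q ^ n := pow_nonneg hq n
  rcases (mul_nonneg hc₁.le hqn).trans hlo |>.eq_or_lt with hgn | hgn
  · have hqn0 : q ^ n = 0 := by nlinarith
    have hg₂ : g (2 * n) = 0 := by rw [hpow, hqn0] at hlo₂ hhi₂; linarith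
    -- the quotient is the junk value `0 / 0 = 0`, matching `q ^ n = 0`
    simp [← hgn, hqn0, hg₂]
  constructor
  · rw [le_div_iff₀ hgn]
    calc c₁ / c₂ * q ^ n * g n ≤ c₁ / c₂ * q ^ n * (c₂ * q ^ n) := by gcongr
      _ = c₁ * q ^ (2 * n) := by field_simp; ring
      _ ≤ g (2 * n) := hlo₂
  · rw [div_le_iff₀ hgn]
    calc g (2 * n) ≤ c₂ * q ^ (2 * n) := hhi₂
      _ = c₂ / c₁ * q ^ n * (c₁ * q ^ n) := by field_simp; ring
      _ ≤ c₂ / c₁ * q ^ n * g n := by gcongr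

theorem eigenvalue_limit_formula_general {X : Type*} [MeasurableSpace X]
    (m : X → Measure X) (ν : Measure X)
    (hm : RandomWalkSpace.IsRandomWalk m) (hrev : RandomWalkSpace.Reversible m ν)
    (Ω : Set X) (hΩ : MeasurableSet Ω)
    (h0 : 0 < ν Ω)
    (h2 : ν (RandomWalkSpace.mClosure m Ω) < ⊤)
    (lam : ℝ)
    (f : X → ℝ) (hfLp : RandomWalkSpace.InLp0 m ν Ω 2 f)
    (hfeigen : ∀ᵐ x ∂ν.restrict Ω,
      -∫ y in RandomWalkSpace.mClosure m Ω, (f y - f x) ∂(m x) = lam * f x)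
    (α α' : ℝ) (hα : 0 < α) (hαα' : α ≤ α')
    (hbound : ∀ᵐ x ∂ν.restrict Ω, α ≤ f x ∧ f x ≤ α') :
    Filter.Tendsto
      (fun n : ℕ =>
        ((RandomWalkSpace.gseq m ν Ω (2 * n)).toReal /
            (RandomWalkSpace.gseq m ν Ω n).toReal) ^ ((n : ℝ)⁻¹))
      Filter.atTop (nhds (1 - lam)) := by
  have hΩ_top : ν Ω ≠ ⊤ := ((measure_mono Set.subset_union_left).trans_lt h2).ne
  have hf_pos : ∀ᵐ x ∂ν.restrict Ω, 0 < f x := hbound.mono fun x hx => hα.trans_le hx.1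
  have hint := RandomWalkSpace.ae_integrableOn_mClosure hm hrev hΩ hfLp
    (hbound.mono fun x hx => abs_le.2 ⟨by linarith [hx.1], hx.2⟩)
  have heig := RandomWalkSpace.ae_setIntegral_eq_of_eigen hm hrev hΩ hfLp.2 hint hfeigen
  have hq := RandomWalkSpace.nonneg_of_ae_setIntegral_eq hm hrev hΩ h0.ne' hf_pos heig
  have hF := RandomWalkSpace.ae_setLIntegral_ofReal_eq hm hrev hΩ hint
    (hf_pos.mono fun _ h => h.le) heig
  have hF_bdd : ∀ᵐ x ∂ν.restrict Ω,
      ENNReal.ofReal α ≤ ENNReal.ofReal (f x) ∧ ENNReal.ofReal (f x) ≤ ENNReal.ofReal α' :=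
    hbound.mono fun x hx => ⟨ENNReal.ofReal_le_ofReal hx.1, ENNReal.ofReal_le_ofReal hx.2⟩
  have hΩ_pos : 0 < (ν Ω).toReal := ENNReal.toReal_pos h0.ne' hΩ_top
  exact tendsto_div_rpow_inv_of_le_pow (g := fun n => (RandomWalkSpace.gseq m ν Ω n).toReal) hq
    (div_pos (mul_pos hα hΩ_pos) (hα.trans_le hαα'))
    (RandomWalkSpace.toReal_gseq_bounds hm hrev hΩ hΩ_top hq hα hαα' hF hF_bdd)

/-- if an eigenfunction associated to `λ_{m,2}(Ω)` is bounded between two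
positive constants on `Ω`, then `λ_{m,2}(Ω) = 1 − lim_n (g_{m,Ω}(2n)/g_{m,Ω}(n))^{1/n}`. -/
theorem eigenvalue_limit_formula {X : Type*} [MeasurableSpace X]
    (m : X → Measure X) (ν : Measure X) [SigmaFinite ν]
    (hm : RandomWalkSpace.IsRandomWalk m) (hrev : RandomWalkSpace.Reversible m ν)
    (Ω : Set X) (hΩ : MeasurableSet Ω)
    (hconn : RandomWalkSpace.mConnected m ν Ω)
    (hconnm : RandomWalkSpace.mConnected m ν (RandomWalkSpace.mClosure m Ω))
    (h0 : 0 < ν Ω) (h1 : ν Ω < ν (RandomWalkSpace.mClosure m Ω))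
    (h2 : ν (RandomWalkSpace.mClosure m Ω) < ⊤)
    (hpoinc : RandomWalkSpace.PoincareInequality m ν Ω 2)
    (lam : ℝ) (hlam0 : 0 ≤ lam)
    (hlam : ENNReal.ofReal lam = RandomWalkSpace.rayleigh m ν Ω 2)
    (f : X → ℝ) (hfLp : RandomWalkSpace.InLp0 m ν Ω 2 f)
    (hfeigen : ∀ᵐ x ∂ν.restrict Ω,
      -∫ y in RandomWalkSpace.mClosure m Ω, (f y - f x) ∂(m x) = lam * f x)
    (α α' : ℝ) (hα : 0 < α) (hαα' : α ≤ α')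
    (hbound : ∀ᵐ x ∂ν.restrict Ω, α ≤ f x ∧ f x ≤ α') :
    Filter.Tendsto
      (fun n : ℕ =>
        ((RandomWalkSpace.gseq m ν Ω (2 * n)).toReal /
            (RandomWalkSpace.gseq m ν Ω n).toReal) ^ ((n : ℝ)⁻¹))
      Filter.atTop (nhds (1 - lam)) :=
  eigenvalue_limit_formula_general m ν hm hrev Ω hΩ h0 h2 lam f hfLp hfeigen α α' hα hαα' hbound
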